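/- (Main theorem, part (b).) If f : [k]^n → [k] (with k ≥ 3) is neutral but not a weighted plurality function, then there exists a probability distribution P on [k]^n such that P(X_i = 2) > P(X_i = 1) for all i ∈ [n], yet P(f(X) = 1) = 1. -/

import Mathlib

open Finset
open scoped Classical

noncomputable section

/-- Probability of an event under a finitely supported distribution `p`. -/
def Pr {Ω : Type*} [Fintype Ω] (p : Ω → ℝ) (φ : Ω → Prop) : ℝ :=
  ∑ x, if φ x then p x else 0

/-- Conditional probability `P(φ | ψ)`. -/
def condPr {Ω : Type*} [Fintype Ω] (p : Ω → ℝ) (φ ψ : Ω → Prop) : ℝ :=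
  Pr p (fun x => φ x ∧ ψ x) / Pr p ψ

/-- Covariance of the indicators of `φ` and `ψ`. -/
def Cov {Ω : Type*} [Fintype Ω] (p : Ω → ℝ) (φ ψ : Ω → Prop) : ℝ :=
  Pr p (fun x => φ x ∧ ψ x) - Pr p φ * Pr p ψ

/-- The effect of voter `i`:
`e_i(f,P) = Σ_j [P(f(X)=j | X_i=j) − P(f(X)=j | X_i≠j)]`. -/
def effect {n k : ℕ} (p : (Fin n → Fin k) → ℝ) (f : (Fin n → Fin k) → Fin k)
    (i : Fin n) : ℝ :=
  ∑ j : Fin k,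
    (condPr p (fun x => f x = j) (fun x => x i = j)
      - condPr p (fun x => f x = j) (fun x => x i ≠ j))

/-!
For a profile `x` and an alternative `b ≠ f x`, let `voteMargin x (f x) b ∈ ℝⁿ` record which voters
vote for the winner `f x` (`+1`) and which for `b` (`-1`). By Gordan's alternative, either some
weights `w` in the simplex make all these margins nonnegative against `w`, which says precisely
that `f` is a weighted plurality function with weights `w`, or some convex combination `μ` of the
margins is negative in every coordinate. In the latter case, relabel each profile by a permutation
sending `f x ↦ 1` and `b ↦ 2`: by neutrality `f` outputs `1` on every relabelled profile, and the
mixture `μ` of the relabelled profiles makes every voter more likely to vote `2` than `1`.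
-/

open Matrix

lemma apply_le_of_nonpos_of_forall_neg_lt {ι : Type*} [Fintype ι] (g : StrongDual ℝ (ι → ℝ))
    {u : ℝ} (hg : ∀ c : ι → ℝ, (∀ i, c i < 0) → g c < u) (c : ι → ℝ) (hc : c ≤ 0) :
    g c ≤ u := by
  have : closure (Set.univ.pi fun _ => Set.Iio 0) ⊆ {c : ι → ℝ | g c ≤ u} :=
    closure_minimal (fun c hc => (hg c fun i => hc i (Set.mem_univ i)).le)
      (isClosed_le g.continuous continuous_const)
  refine this ?_
  rw [closure_pi_set]
  intro i _
  simpa [closure_Iio] using hc i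

lemma apply_single_nonneg_of_forall_nonpos_le {ι : Type*} [DecidableEq ι]
    (g : (ι → ℝ) →ₗ[ℝ] ℝ) {u : ℝ} (hg : ∀ c : ι → ℝ, c ≤ 0 → g c ≤ u) (i : ι) :
    0 ≤ g (Pi.single i 1) := by
  by_contra! hi
  have hu : 0 ≤ u := by simpa using hg 0 le_rfl
  -- this nonpositive vector has value `u + 1`
  have := hg (((u + 1) / g (Pi.single i 1)) • Pi.single i 1) fun j => by
    rcases eq_or_ne j i with rfl | hj
    · simpa using div_nonpos_of_nonneg_of_nonpos (by linarith) hi.le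
    · simp [hj]
  rw [map_smul, smul_eq_mul, div_mul_cancel₀ _ hi.ne] at this
  linarith

lemma apply_eq_dotProduct_single {ι : Type*} [Fintype ι] [DecidableEq ι]
    (g : (ι → ℝ) →ₗ[ℝ] ℝ) (c : ι → ℝ) : g c = c ⬝ᵥ fun i => g (Pi.single i 1) := by
  have hsingle : ∀ i, (Pi.single i 1 : ι → ℝ) = fun j => if i = j then 1 else 0 :=
    fun i => funext fun j => by simp [Pi.single_apply, eq_comm]
  simpa [dotProduct, hsingle] using g.pi_apply_eq_sum_univ c

/-- **Gordan's alternative**. -/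
theorem exists_vecMul_neg_or_exists_mulVec_nonneg {T ι : Type*} [Fintype T] [Fintype ι]
    [Nonempty T] (V : Matrix T ι ℝ) :
    (∃ μ ∈ stdSimplex ℝ T, ∀ i, (μ ᵥ* V) i < 0) ∨ ∃ w ∈ stdSimplex ℝ ι, ∀ t, 0 ≤ (V *ᵥ w) t := by
  refine or_iff_not_imp_left.2 fun hV => ?_
  have hdisj : Disjoint (Set.univ.pi fun _ => Set.Iio 0) (vecMulLinear V '' stdSimplex ℝ T) := by
    refine Set.disjoint_left.2 fun c hc ⟨μ, hμ, hμc⟩ => hV ⟨μ, hμ, fun i => ?_⟩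
    simpa [← hμc] using hc i (Set.mem_univ i)
  obtain ⟨g, u, hgN, hgC⟩ := geometric_hahn_banach_open (convex_pi fun _ _ => convex_Iio 0)
    (isOpen_set_pi Set.finite_univ fun _ _ => isOpen_Iio)
    ((convex_stdSimplex ℝ T).linear_image _) hdisj
  have hle : ∀ c : ι → ℝ, c ≤ 0 → g c ≤ u :=
    apply_le_of_nonpos_of_forall_neg_lt g fun c hc => hgN c fun i _ => hc i
  set w : ι → ℝ := fun i => g (Pi.single i 1)
  have hw : ∀ i, 0 ≤ w i := apply_single_nonneg_of_forall_nonpos_le (g : (ι → ℝ) →ₗ[ℝ] ℝ) hle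
  have hg : ∀ c, g c = c ⬝ᵥ w := apply_eq_dotProduct_single (g : (ι → ℝ) →ₗ[ℝ] ℝ)
  have hu : 0 ≤ u := by simpa using hle 0 le_rfl
  have hrow : ∀ t, u ≤ (V *ᵥ w) t := fun t => by
    have := hgC _ ⟨_, single_mem_stdSimplex ℝ t, rfl⟩
    rwa [vecMulLinear_apply, single_one_vecMul, hg] at this
  have hS : 0 < ∑ i, w i := by
    refine lt_of_le_of_ne (Finset.sum_nonneg fun i _ => hw i) fun hS => ?_
    have hw0 : w = 0 := funext fun i =>
      (Finset.sum_eq_zero_iff_of_nonneg (fun i _ => hw i)).1 hS.symm i (Finset.mem_univ i)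
    have h1 := hgN (fun _ => -1) fun i _ => by simp
    have h2 := hrow (Classical.arbitrary T)
    simp only [hg, hw0, dotProduct_zero, mulVec_zero, Pi.zero_apply] at h1 h2
    linarith
  refine ⟨(∑ i, w i)⁻¹ • w, ⟨fun i => ?_, ?_⟩, fun t => ?_⟩
  · exact mul_nonneg (inv_nonneg.2 hS.le) (hw i)
  · simp [← Finset.mul_sum, hS.ne']
  · rw [mulVec_smul]
    exact mul_nonneg (inv_nonneg.2 hS.le) (hu.trans (hrow t))

def voteMargin {ι α : Type*} [DecidableEq α] (x : ι → α) (a b : α) : ι → ℝ :=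
  fun i => (if x i = a then 1 else 0) - if x i = b then 1 else 0

lemma voteMargin_perm {ι α : Type*} [DecidableEq α] (σ : Equiv.Perm α) (x : ι → α) (a b : α) :
    voteMargin (fun i => σ (x i)) (σ a) (σ b) = voteMargin x a b := by
  ext i
  simp only [voteMargin, σ.apply_eq_iff_eq]

lemma voteMargin_dotProduct {ι α : Type*} [Fintype ι] [DecidableEq α] (x : ι → α) (a b : α)
    (w : ι → ℝ) :
    voteMargin x a b ⬝ᵥ w =
      (∑ i, if x i = a then w i else 0) - ∑ i, if x i = b then w i else 0 := by
  simp [voteMargin, dotProduct, sub_mul, ite_mul]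

lemma exists_relabel_voteMargin {ι α : Type*} [DecidableEq α] {f : (ι → α) → α}
    (hf : ∀ (σ : Equiv.Perm α) x, f (fun i => σ (x i)) = σ (f x))
    {x : ι → α} {b : α} (hb : b ≠ f x) {c d : α} (hcd : c ≠ d) :
    ∃ y, f y = c ∧ voteMargin y c d = voteMargin x (f x) b := by
  obtain ⟨σ, hσa, hσb⟩ := MulAction.is_two_pretransitive_iff.1
    (Equiv.Perm.isMultiplyPretransitive α 2) hb.symm hcd
  rw [Equiv.Perm.smul_def] at hσa hσb
  exact ⟨fun i => σ (x i), by rw [hf, hσa], by rw [← hσa, ← hσb, voteMargin_perm]⟩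

def pushforward {T Ω : Type*} [Fintype T] (μ : T → ℝ) (y : T → Ω) : Ω → ℝ :=
  fun z => ∑ t with y t = z, μ t

lemma Pr_pushforward {T Ω : Type*} [Fintype T] [Fintype Ω] (μ : T → ℝ) (y : T → Ω)
    (φ : Ω → Prop) : Pr (pushforward μ y) φ = ∑ t, if φ (y t) then μ t else 0 := by
  simp only [Pr, pushforward, ← Finset.sum_filter]
  convert Finset.sum_fiberwise_eq_sum_filter _ _ y μ using 1
  simp

lemma pushforward_nonneg {T Ω : Type*} [Fintype T] {μ : T → ℝ} (hμ : ∀ t, 0 ≤ μ t)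
    (y : T → Ω) (z : Ω) : 0 ≤ pushforward μ y z :=
  Finset.sum_nonneg fun t _ => hμ t

lemma sum_pushforward {T Ω : Type*} [Fintype T] [Fintype Ω] (μ : T → ℝ) (y : T → Ω) :
    ∑ z, pushforward μ y z = ∑ t, μ t := by
  simpa [Pr] using Pr_pushforward μ y fun _ => True

lemma Pr_sub_Pr_pushforward {T ι α : Type*} [Fintype T] [Fintype ι] [DecidableEq ι] [Fintype α]
    [DecidableEq α] (μ : T → ℝ) (y : T → ι → α) (i : ι) (a b : α) :
    Pr (pushforward μ y) (fun z => z i = a) - Pr (pushforward μ y) (fun z => z i = b) =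
      (μ ᵥ* of fun t => voteMargin (y t) a b) i := by
  simp only [Pr_pushforward, ← Finset.sum_sub_distrib, vecMul, dotProduct, of_apply, voteMargin,
    mul_sub, mul_ite, mul_one, mul_zero]
  -- `Pr` decides events classically, `voteMargin` with `DecidableEq α`
  congr!

theorem not_weighted_plurality_fails_to_aggregate {n k : ℕ} [NeZero k] (hk : 3 ≤ k)
    (f : (Fin n → Fin k) → Fin k)
    (hneutral : ∀ (σ : Equiv.Perm (Fin k)) (x : Fin n → Fin k),
      f (fun i => σ (x i)) = σ (f x))
    (hnotwp : ¬ ∃ w : Fin n → ℝ, (∀ i, 0 ≤ w i) ∧ (∑ i, w i = 1) ∧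
      ∀ x (a b : Fin k), f x = a →
        (∑ i, if x i = b then w i else 0) ≤ ∑ i, if x i = a then w i else 0) :
    ∃ p : (Fin n → Fin k) → ℝ, (∀ x, 0 ≤ p x) ∧ (∑ x, p x = 1) ∧
      (∀ i : Fin n, Pr p (fun x => x i = 1) < Pr p (fun x => x i = 2)) ∧
      Pr p (fun x => f x = 1) = 1 := by
  have h12 : (1 : Fin k) ≠ 2 := by
    simp [Fin.ext_iff, Nat.mod_eq_of_lt (show 1 < k by omega),
      Nat.mod_eq_of_lt (show 2 < k by omega)]
  have : Nontrivial (Fin k) := Fin.nontrivial_iff_two_le.2 (by omega)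
  let T := {q : (Fin n → Fin k) × Fin k // q.2 ≠ f q.1}
  have : Nonempty T := by
    obtain ⟨b, hb⟩ := exists_ne (f fun _ => 0)
    exact ⟨⟨(fun _ => 0, b), hb⟩⟩
  rcases exists_vecMul_neg_or_exists_mulVec_nonneg
    (of fun t : T => voteMargin t.1.1 (f t.1.1) t.1.2) with ⟨μ, hμ, hneg⟩ | ⟨w, hw, hpos⟩
  · choose y hfy hy using fun t : T => exists_relabel_voteMargin hneutral t.2 h12
    refine ⟨pushforward μ y, pushforward_nonneg hμ.1 y, (sum_pushforward μ y).trans hμ.2,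
      fun i => ?_, by simpa [Pr_pushforward, hfy] using hμ.2⟩
    have := Pr_sub_Pr_pushforward μ y i 1 2
    simp only [hy] at this
    linarith [hneg i]
  · refine absurd ⟨w, hw.1, hw.2, fun x a b hfx => ?_⟩ hnotwp
    subst hfx
    rcases eq_or_ne b (f x) with rfl | hb
    · exact le_rfl
    · simpa [mulVec, voteMargin_dotProduct] using hpos ⟨(x, b), hb⟩
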